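/- Let n and d be positive integers and let F ∈ (ℂ^n)^{⊗d} be a symmetric tensor with corresponding degree-d polynomial p_F. Then π(Ann(F)_𝟏) = Ann(p_F)_d: the image under π of the multidegree-(1,…,1) component of the apolar ideal of F equals the degree-d component of the apolar ideal of p_F. -/

import Mathlib

/-!
Common setup, following the paper "On the abundance of minimal border rank symmetric
tensors verifying Comon's conjecture".

* `S = ℂ[α_{i,j} : 1 ≤ i ≤ d, 1 ≤ j ≤ n]` is modeled as `MvPolynomial (Fin d × Fin n) ℂ`,
  with the `ℤ^d`-grading in which `deg α_{i,j} = e_i`; `Scomp n d u` is the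
  multidegree-`u` component (`u : Fin d → ℕ`).
* `V = ℂ[β_1,…,β_n]` is modeled as `MvPolynomial (Fin n) ℂ` with its standard grading;
  `Vcomp n N` is the degree-`N` component.
* The graded duals `T` and `P` are modeled by the same polynomial rings, with `S`
  (resp. `V`) acting by differentiation (`apolar`); `ann F` is the apolar
  (annihilator) ideal of `F`.
* A tensor `F ∈ (ℂ^n)^{⊗d}` is an element of the multidegree-`(1,…,1)` component
  `Scomp n d (fun _ => 1)` (a multilinear form in the `x_{i,j}`).
-/

open MvPolynomial Submodule Module

noncomputable section

namespace BorderComon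

/-- the multidegree-`u` graded component of `S`. -/
def Scomp (n d : ℕ) (u : Fin d → ℕ) : Submodule ℂ (MvPolynomial (Fin d × Fin n) ℂ) :=
  weightedHomogeneousSubmodule ℂ (fun p : Fin d × Fin n => Pi.single p.1 1) u

/-- the degree-`N` graded component of `V`. -/
def Vcomp (n : ℕ) (N : ℕ) : Submodule ℂ (MvPolynomial (Fin n) ℂ) :=
  homogeneousSubmodule (Fin n) ℂ N

/-- the diagonal ring map `π : S → V`, `α_{i,j} ↦ β_j`. -/
def piAlg (n d : ℕ) : MvPolynomial (Fin d × Fin n) ℂ →ₐ[ℂ] MvPolynomial (Fin n) ℂ :=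
  aeval (fun p : Fin d × Fin n => X p.2)

/-- `π` as a `ℂ`-linear map. -/
def piL (n d : ℕ) : MvPolynomial (Fin d × Fin n) ℂ →ₗ[ℂ] MvPolynomial (Fin n) ℂ :=
  (piAlg n d).toLinearMap

/-- the ring map `ρ : S → V`, `α_{1,j} ↦ β_j` and `α_{i,j} ↦ 0` for `i ≥ 2`
(rows are `0`-indexed, so the first row is row `0`). -/
def rho (n d : ℕ) : MvPolynomial (Fin d × Fin n) ℂ →ₐ[ℂ] MvPolynomial (Fin n) ℂ :=
  aeval (fun p : Fin d × Fin n => if (p.1 : ℕ) = 0 then X p.2 else 0)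

/-- the result of differentiating `F` by the monomial `X^a`:
`∂^a X^b = (∏_i b_i!/(b_i-a_i)!) X^{b-a}` (and `= 0` unless `a ≤ b`, which is
automatic since the descending factorial vanishes there). -/
def diffMon {σ : Type*} (a : σ →₀ ℕ) (F : MvPolynomial σ ℂ) : MvPolynomial σ ℂ :=
  ∑ b ∈ F.support, (F.coeff b * ∏ i ∈ a.support, ((b i).descFactorial (a i) : ℂ)) •
    monomial (b - a) (1 : ℂ)

/-- the apolarity action: `apolar F ψ = ψ ∘ F` is the result of letting `ψ` act on `F`
by differentiation, linearly in `ψ`. -/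
def apolar {σ : Type*} (F : MvPolynomial σ ℂ) : MvPolynomial σ ℂ →ₗ[ℂ] MvPolynomial σ ℂ :=
  Finsupp.lsum ℂ (fun a : σ →₀ ℕ => LinearMap.toSpanSingleton ℂ _ (diffMon a F))
    ∘ₗ (AddMonoidAlgebra.coeffLinearEquiv ℂ).toLinearMap

/-- the apolar (annihilator) ideal `Ann(F) = {ψ : ψ ∘ F = 0}`, as a subspace. -/
def ann {σ : Type*} (F : MvPolynomial σ ℂ) : Submodule ℂ (MvPolynomial σ ℂ) :=
  LinearMap.ker (apolar F)

/-- the ideal `I_R ⊆ S` generated by the `2×2` minors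
`α_{i,j} α_{k,ℓ} − α_{i,ℓ} α_{k,j}`, `i < k`, `j < ℓ`. -/
def IR (n d : ℕ) : Ideal (MvPolynomial (Fin d × Fin n) ℂ) :=
  Ideal.span {q | ∃ i k : Fin d, ∃ j l : Fin n, i < k ∧ j < l ∧
    q = X (i, j) * X (k, l) - X (i, l) * X (k, j)}

/-- `J ⊆ S` is a (multigraded) homogeneous ideal: it is the sum of its
multigraded components. -/
def IsHomogS (n d : ℕ) (J : Ideal (MvPolynomial (Fin d × Fin n) ℂ)) : Prop :=
  Submodule.restrictScalars ℂ J = ⨆ u : Fin d → ℕ, (Submodule.restrictScalars ℂ J ⊓ Scomp n d u)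

/-- `I ⊆ V` is a homogeneous ideal: it is the sum of its graded components. -/
def IsHomogV (n : ℕ) (I : Ideal (MvPolynomial (Fin n) ℂ)) : Prop :=
  Submodule.restrictScalars ℂ I = ⨆ N : ℕ, (Submodule.restrictScalars ℂ I ⊓ Vcomp n N)

/-- the exponent redistribution underlying `ψ_u`: in the sorted list
`i_1 ≤ ⋯ ≤ i_N` of the indices of the monomial `β^γ` (value `j` occurring `γ j`
times, `N = |γ|`), row `i` receives the block of positions
`[∑_{i'<i} u i', ∑_{i'≤i} u i')`, while value `j` occupies positions
`[∑_{j'<j} γ j', ∑_{j'≤j} γ j')`; hence the exponent of `α_{i,j}` is the size of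
the intersection of these two intervals. -/
def distrib (n d : ℕ) (u : Fin d → ℕ) (γ : Fin n →₀ ℕ) : (Fin d × Fin n) →₀ ℕ :=
  Finsupp.equivFunOnFinite.symm fun p : Fin d × Fin n =>
    min (∑ i ∈ Finset.univ.filter fun i : Fin d => (i : ℕ) ≤ (p.1 : ℕ), u i)
        (∑ j ∈ Finset.univ.filter fun j : Fin n => (j : ℕ) ≤ (p.2 : ℕ), γ j)
    - max (∑ i ∈ Finset.univ.filter fun i : Fin d => (i : ℕ) < (p.1 : ℕ), u i)
          (∑ j ∈ Finset.univ.filter fun j : Fin n => (j : ℕ) < (p.2 : ℕ), γ j)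

/-- the linear map `ψ_u : V → S` sending a monomial `β_{i_1} β_{i_2} ⋯ β_{i_N}`
with `i_1 ≤ i_2 ≤ ⋯ ≤ i_N` to
`(α_{1,i_1} ⋯ α_{1,i_{u_1}}) (α_{2,i_{u_1+1}} ⋯ α_{2,i_{u_1+u_2}}) ⋯`.
(Its restriction to `Vcomp n (∑ i, u i)` is the map `ψ_u : V_{|u|} → S_u` of the
paper.) -/
def psi (n d : ℕ) (u : Fin d → ℕ) :
    MvPolynomial (Fin n) ℂ →ₗ[ℂ] MvPolynomial (Fin d × Fin n) ℂ :=
  AddMonoidAlgebra.mapDomainLinearMap ℂ ℂ (distrib n d u)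

/-- `Υ(I) = I_R + ∑_{u} ψ_u(I_{|u|}) ⊆ S`. -/
def Upsilon (n d : ℕ) (I : Ideal (MvPolynomial (Fin n) ℂ)) :
    Submodule ℂ (MvPolynomial (Fin d × Fin n) ℂ) :=
  restrictScalars ℂ (IR n d) ⊔
    ⨆ u : Fin d → ℕ, Submodule.map (psi n d u) (restrictScalars ℂ I ⊓ Vcomp n (∑ i, u i))

/-- the irrelevant ideal `B_X = ∏_{i=1}^d (α_{i,1},…,α_{i,n}) ⊆ S`. -/
def BX (n d : ℕ) : Ideal (MvPolynomial (Fin d × Fin n) ℂ) :=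
  ∏ i : Fin d, Ideal.span (Set.range fun j : Fin n => X (i, j))

/-- the irrelevant ideal `B_Y = (β_1,…,β_n) ⊆ V`. -/
def BY (n : ℕ) : Ideal (MvPolynomial (Fin n) ℂ) :=
  Ideal.span (Set.range X)

/-- `Σ(J) = ⊕_{a ≥ 0} ⊕_{s ∈ ℰ} π(J_{a𝟏+s}) ⊆ V`, where
`ℰ = {0, e_1, e_1+e_2, …, e_1+⋯+e_{d-1}}` (the element `s` with `m` ones is
`fun i => if i < m then 1 else 0`). -/
def SigmaMap (n d : ℕ) (J : Ideal (MvPolynomial (Fin d × Fin n) ℂ)) :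
    Submodule ℂ (MvPolynomial (Fin n) ℂ) :=
  ⨆ a : ℕ, ⨆ m : Fin d, Submodule.map (piL n d)
    (restrictScalars ℂ J ⊓ Scomp n d (fun i => a + if (i : ℕ) < (m : ℕ) then 1 else 0))

/-- the set of tensors of rank at most `r`: sums of `r` decomposable tensors
`v_1 ⊗ ⋯ ⊗ v_d = ∏_i (∑_j v_i(j) x_{i,j})`. -/
def rankLE (n d r : ℕ) : Set (MvPolynomial (Fin d × Fin n) ℂ) :=
  {F | ∃ v : Fin r → Fin d → Fin n → ℂ,
    F = ∑ s : Fin r, ∏ i : Fin d, ∑ j : Fin n, C (v s i j) * X (i, j)}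

/-- `F` has border rank at most `r`: coefficientwise (finitely many coefficients are
involved), `F` lies in the closure of the set of tensors of rank at most `r`. -/
def brkLE (n d : ℕ) (F : MvPolynomial (Fin d × Fin n) ℂ) (r : ℕ) : Prop :=
  (fun m => coeff m F) ∈ closure ((fun G => fun m => coeff m G) '' rankLE n d r)

/-- the border rank of a tensor. -/
def brk (n d : ℕ) (F : MvPolynomial (Fin d × Fin n) ℂ) : ℕ :=
  sInf {r | brkLE n d F r}

/-- polynomials that are sums of `r` `d`-th powers of linear forms. -/
def srankLE (n d r : ℕ) : Set (MvPolynomial (Fin n) ℂ) :=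
  {p | ∃ c : Fin r → Fin n → ℂ, p = ∑ s : Fin r, (∑ j : Fin n, C (c s j) * X j) ^ d}

/-- `p` has symmetric border rank at most `r`. -/
def sbrkLE (n d : ℕ) (p : MvPolynomial (Fin n) ℂ) (r : ℕ) : Prop :=
  (fun m => coeff m p) ∈ closure ((fun q => fun m => coeff m q) '' srankLE n d r)

/-- the symmetric border rank of a degree-`d` form. -/
def sbrk (n d : ℕ) (p : MvPolynomial (Fin n) ℂ) : ℕ :=
  sInf {r | sbrkLE n d p r}

/-- `F` is a symmetric tensor: invariant under the permutations of the `d` factors. -/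
def IsSymm (n d : ℕ) (F : MvPolynomial (Fin d × Fin n) ℂ) : Prop :=
  ∀ τ : Equiv.Perm (Fin d), rename (Prod.map τ id) F = F

/-- the degree-`d` polynomial `p_F` corresponding to a symmetric tensor `F`, obtained
by identifying all the rows of variables (`x_{i,j} ↦ y_j`); `F` is the polarization
of `p_F`. -/
def pF (n d : ℕ) (F : MvPolynomial (Fin d × Fin n) ℂ) : MvPolynomial (Fin n) ℂ :=
  rename Prod.snd F

/-- `F` is concise: the contraction `(ℂ^n)^* → (ℂ^n)^{⊗(d-1)}` of the first tensor
factor, `w ↦ F(x_{1,j} := w_j)`, is injective. -/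
def Concise (n d : ℕ) (F : MvPolynomial (Fin d × Fin n) ℂ) : Prop :=
  Function.Injective fun w : Fin n → ℂ =>
    aeval (fun p : Fin d × Fin n => if (p.1 : ℕ) = 0 then C (w p.2) else X p) F

/-- the ideal `∑_{0<u<𝟏} S·Ann(F)_u` generated by the components `Ann(F)_u`,
`0 < u < 𝟏` (componentwise). -/
def midIdeal (n d : ℕ) (F : MvPolynomial (Fin d × Fin n) ℂ) :
    Ideal (MvPolynomial (Fin d × Fin n) ℂ) :=
  Ideal.span (⋃ u ∈ {u : Fin d → ℕ | 0 < u ∧ u < fun _ => 1},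
    ((ann F ⊓ Scomp n d u : Submodule ℂ (MvPolynomial (Fin d × Fin n) ℂ)) :
      Set (MvPolynomial (Fin d × Fin n) ℂ)))

/-- `F` is a *sharp* tensor:
(1) `Ann(F)` has exactly `n-1` minimal generators of multidegree `𝟏`;
(2) `dim (S/Ann F)_u = n` for all `0 < u < 𝟏`;
(3) `dim (S/(Ann(F)_{e_i+e_j}))_{s e_i + e_j} = n` for all `i ≠ j`, `1 ≤ s ≤ d-1`. -/
def Sharp (n d : ℕ) (F : MvPolynomial (Fin d × Fin n) ℂ) : Prop :=
  (finrank ℂ (ann F ⊓ Scomp n d fun _ => 1 :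
        Submodule ℂ (MvPolynomial (Fin d × Fin n) ℂ)) -
      finrank ℂ (restrictScalars ℂ (midIdeal n d F) ⊓ Scomp n d fun _ => 1 :
        Submodule ℂ (MvPolynomial (Fin d × Fin n) ℂ)) = n - 1) ∧
  (∀ u : Fin d → ℕ, 0 < u → u < (fun _ => 1) →
    finrank ℂ (Scomp n d u ⧸ Submodule.comap (Scomp n d u).subtype (ann F)) = n) ∧
  (∀ i j : Fin d, i ≠ j → ∀ s : ℕ, 1 ≤ s → s ≤ d - 1 →
    finrank ℂ (Scomp n d (Pi.single i s + Pi.single j 1) ⧸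
      Submodule.comap (Scomp n d (Pi.single i s + Pi.single j 1)).subtype
        (restrictScalars ℂ (Ideal.span
          ((ann F ⊓ Scomp n d (Pi.single i 1 + Pi.single j 1) :
            Submodule ℂ (MvPolynomial (Fin d × Fin n) ℂ)) :
            Set (MvPolynomial (Fin d × Fin n) ℂ))))) = n)

/-!
For `ψ ∈ S_𝟏` only the multilinear monomials `α_{1,g 1} ⋯ α_{d,g d}` occur, indexed by words
`g : Fin d → Fin n` (their exponents are `graphExp g`), and `π` sends such a monomial to `β^γ`
with `γ = content g` the letter multiplicities of `g`; every `γ` of degree `d` arises, so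
`π(S_𝟏) = V_d`. Between forms of the same degree, differentiation pairs only equal monomials:
`ψ ∘ F = ∑_g ψ_g F_g` and `q ∘ p = ∑_γ γ! q_γ p_γ`. Since `F` is symmetric, `F_g` only depends
on `content g`, and exactly `d!/γ!` words have content `γ`, so the coefficient of `β^γ` in `p_F`
is `(d!/γ!) F_g`. Hence `π(ψ) ∘ p_F = d! (ψ ∘ F)` for `ψ ∈ S_𝟏`, and `π` matches `Ann(F)_𝟏`
with `Ann(p_F)_d`.
-/

open scoped Nat

section Content

open Finset

variable {ι κ : Type*} [Fintype ι]

def content (g : ι → κ) : κ →₀ ℕ :=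
  ∑ i, Finsupp.single (g i) 1

lemma content_apply [DecidableEq κ] (g : ι → κ) (j : κ) : content g j = #{i | g i = j} := by
  simp [content, Finsupp.single_apply]

lemma content_comp_equiv (g : ι → κ) (τ : Equiv.Perm ι) : content (g ∘ τ) = content g :=
  Equiv.sum_comp τ fun i => Finsupp.single (g i) 1

lemma mapDomain_content {κ' : Type*} (f : κ → κ') (g : ι → κ) :
    (content g).mapDomain f = content (f ∘ g) := by
  simp [content, Finsupp.mapDomain_finsetSum, Finsupp.mapDomain_single]

lemma degree_content (g : ι → κ) : (content g).degree = Fintype.card ι := by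
  simp [content, map_sum]

lemma exists_perm_of_content_eq [DecidableEq κ] {g h : ι → κ} (hgh : content g = content h) :
    ∃ τ : Equiv.Perm ι, g = h ∘ τ := by
  have hcard (j : κ) : Fintype.card {i // g i = j} = Fintype.card {i // h i = j} := by
    rw [Fintype.card_subtype, Fintype.card_subtype, ← content_apply, ← content_apply, hgh]
  exact ⟨Equiv.ofFiberEquiv fun j => Fintype.equivOfCardEq (hcard j),
    funext fun i => (Equiv.ofFiberEquiv_map _ i).symm⟩

lemma card_content_eq_mul_prod_factorial [Fintype κ] [DecidableEq κ] [DecidableEq ι]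
    (g : ι → κ) :
    #{h : ι → κ | content h = content g} * (content g).prod (fun _ k => k !) =
      (Fintype.card ι)! := by
  have hfiber (h : ι → κ) (hh : content h = content g) :
      #{τ : Equiv.Perm ι | g ∘ ⇑τ = h} = (content g).prod (fun _ k => k !) := by
    obtain ⟨τ₀, rfl⟩ := exists_perm_of_content_eq hh
    calc #{τ : Equiv.Perm ι | g ∘ ⇑τ = g ∘ τ₀}
        = #{τ : Equiv.Perm ι | g ∘ ⇑τ = g} := by
          refine (Finset.card_equiv (Equiv.mulRight τ₀) fun τ => ?_).symm
          simp only [Finset.mem_filter, Finset.mem_univ, true_and, Equiv.coe_mulRight,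
            Equiv.Perm.coe_mul]
          exact τ₀.surjective.injective_comp_right.eq_iff.symm
      _ = ∏ j, (Fintype.card {i // g i = j})! := by
          rw [← DomMulAct.stabilizer_card g, Fintype.card_subtype]
      _ = (content g).prod (fun _ k => k !) := by
          rw [Finsupp.prod_fintype _ _ (fun _ => Nat.factorial_zero)]
          simp [content_apply, Fintype.card_subtype]
  have hsum : (Fintype.card ι)! =
      ∑ h with content h = content g, #{τ : Equiv.Perm ι | g ∘ ⇑τ = h} := by
    rw [← Fintype.card_perm, ← Finset.card_univ]
    exact Finset.card_eq_sum_card_fiberwise fun τ _ => by simp [content_comp_equiv]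
  rw [hsum, Finset.sum_congr rfl fun h hh => hfiber h (Finset.mem_filter.mp hh).2,
    Finset.sum_const, smul_eq_mul]

lemma content_eq_toFinsupp [DecidableEq κ] (g : ι → κ) :
    content g = Multiset.toFinsupp (univ.val.map g) := by
  ext j
  rw [content_apply, Multiset.toFinsupp_apply, Multiset.count_map]
  simp [eq_comm, Finset.card_def, Finset.filter_val]

lemma exists_content_eq {m : ℕ} (γ : κ →₀ ℕ) (hγ : γ.degree = m) :
    ∃ g : Fin m → κ, content g = γ := by
  classical
  obtain ⟨l, hl⟩ : ∃ l : List κ, (l : Multiset κ) = Finsupp.toMultiset γ :=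
    ⟨_, Multiset.coe_toList _⟩
  have hlen : l.length = m := by
    rw [← Multiset.coe_card, hl, Finsupp.card_toMultiset, ← hγ]
    rfl
  subst hlen
  refine ⟨l.get, ?_⟩
  rw [content_eq_toFinsupp, Fin.univ_val_map, List.ofFn_get, hl, Finsupp.toMultiset_toFinsupp]

end Content

section GraphExponent

variable {ι κ : Type*} [Fintype ι]

def graphExp (g : ι → κ) : (ι × κ) →₀ ℕ :=
  content fun i => (i, g i)

lemma graphExp_apply [DecidableEq ι] [DecidableEq κ] (g : ι → κ) (i : ι) (j : κ) :
    graphExp g (i, j) = if g i = j then 1 else 0 := by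
  rw [graphExp, content_apply]
  split_ifs with h
  · rw [Finset.card_eq_one]
    exact ⟨i, by ext i'; aesop⟩
  · rw [Finset.card_eq_zero]
    ext i'
    aesop

lemma graphExp_injective [DecidableEq ι] [DecidableEq κ] :
    Function.Injective (graphExp : (ι → κ) → (ι × κ) →₀ ℕ) := by
  intro g h hgh
  funext i
  simpa [graphExp_apply] using congr($hgh (i, h i))

lemma degree_graphExp (g : ι → κ) : (graphExp g).degree = Fintype.card ι :=
  degree_content _

lemma mapDomain_snd_graphExp (g : ι → κ) : (graphExp g).mapDomain Prod.snd = content g :=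
  mapDomain_content _ _

lemma mapDomain_prodMap_graphExp (τ : Equiv.Perm ι) (g : ι → κ) :
    (graphExp g).mapDomain (Prod.map τ id) = graphExp (g ∘ τ.symm) := by
  rw [graphExp, mapDomain_content, graphExp,
    ← content_comp_equiv (fun i => (i, (g ∘ τ.symm) i)) τ]
  simp [Function.comp_def]

lemma prod_factorial_graphExp [DecidableEq ι] [DecidableEq κ] (g : ι → κ) :
    (graphExp g).prod (fun _ k => k !) = 1 :=
  Finset.prod_eq_one fun ⟨i, j⟩ hij => by
    rw [Finsupp.mem_support_iff, graphExp_apply] at hij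
    rw [graphExp_apply, if_pos (by by_contra h; simp [h] at hij)]
    exact Nat.factorial_one

lemma exists_graphExp_eq_iff [DecidableEq ι] [Fintype κ] [DecidableEq κ] {a : (ι × κ) →₀ ℕ} :
    (∃ g, graphExp g = a) ↔ ∀ i, ∑ j, a (i, j) = 1 := by
  constructor
  · rintro ⟨g, rfl⟩ i
    simp [graphExp_apply]
  · intro ha
    have hrow (i : ι) : ∃ j, a.curry i = Finsupp.single j 1 := by
      rw [← Finsupp.sum_eq_one_iff, Finsupp.sum_fintype _ _ fun _ => rfl]
      exact ha i
    choose g hg using hrow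
    refine ⟨g, Finsupp.ext fun ⟨i, j⟩ => ?_⟩
    rw [graphExp_apply, ← Finsupp.curry_apply, hg, Finsupp.single_apply]

end GraphExponent

section Apolarity

variable {σ : Type*}

lemma apolar_monomial (F : MvPolynomial σ ℂ) (a : σ →₀ ℕ) (c : ℂ) :
    apolar F (monomial a c) = c • diffMon a F := by
  simp [apolar]

lemma prod_descFactorial_eq_zero_of_degree_eq {a b : σ →₀ ℕ} (hab : b.degree = a.degree)
    (hne : b ≠ a) :
    ∏ i ∈ a.support, (b i).descFactorial (a i) = 0 := by
  contrapose! hne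
  have hle : a ≤ b := fun i => by
    by_cases hi : i ∈ a.support
    · exact not_lt.mp fun h =>
        Finset.prod_ne_zero_iff.mp hne i hi (Nat.descFactorial_eq_zero_iff_lt.mpr h)
    · simp [Finsupp.notMem_support_iff.mp hi]
  have hsub : (b - a).degree = 0 := by
    have := map_add Finsupp.degree a (b - a)
    rw [add_tsub_cancel_of_le hle, hab] at this
    omega
  exact le_antisymm (tsub_eq_zero_iff_le.mp ((Finsupp.degree_eq_zero_iff _).mp hsub)) hle

lemma diffMon_of_isHomogeneous {F : MvPolynomial σ ℂ} {N : ℕ} (hF : F.IsHomogeneous N)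
    {a : σ →₀ ℕ} (ha : a.degree = N) :
    diffMon a F = C (coeff a F * (a.prod fun _ k => k ! : ℕ)) := by
  rw [diffMon, Finset.sum_eq_single a]
  · simp [Finsupp.prod, Nat.descFactorial_self, smul_eq_C_mul]
  · intro b hb hne
    rw [← Nat.cast_prod, prod_descFactorial_eq_zero_of_degree_eq
      ((hF.degree_eq_sum_deg_support hb).symm.trans ha.symm) hne]
    simp
  · intro ha
    simp [notMem_support_iff.mp ha]

end Apolarity

lemma map_ker_inf_eq {R M N P Q : Type*} [Semiring R] [AddCommMonoid M] [Module R M]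
    [AddCommMonoid N] [Module R N] [AddCommMonoid P] [Module R P] [AddCommMonoid Q] [Module R Q]
    {π : M →ₗ[R] N} {A : M →ₗ[R] P} {B : N →ₗ[R] Q} {U : Submodule R M} {W : Submodule R N}
    (hUW : U.map π = W) (hBA : ∀ x ∈ U, B (π x) = 0 ↔ A x = 0) :
    (LinearMap.ker A ⊓ U).map π = LinearMap.ker B ⊓ W := by
  ext y
  simp only [Submodule.mem_map, Submodule.mem_inf, LinearMap.mem_ker, ← hUW]
  constructor
  · rintro ⟨x, ⟨hAx, hx⟩, rfl⟩
    exact ⟨(hBA x hx).mpr hAx, x, hx, rfl⟩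
  · rintro ⟨hBy, x, hx, rfl⟩
    exact ⟨x, ⟨(hBA x hx).mp hBy, hx⟩, rfl⟩

section Tensor

variable {n d : ℕ}

lemma mem_Scomp_iff {F : MvPolynomial (Fin d × Fin n) ℂ} {u : Fin d → ℕ} :
    F ∈ Scomp n d u ↔ ∀ a ∈ F.support, ∀ i, ∑ j, a (i, j) = u i := by
  have hweight (a : (Fin d × Fin n) →₀ ℕ) (i : Fin d) :
      Finsupp.weight (fun p : Fin d × Fin n => (Pi.single p.1 1 : Fin d → ℕ)) a i =
        ∑ j, a (i, j) := by
    rw [Finsupp.weight_apply, Finsupp.sum_fintype _ _ (by simp), Finset.sum_apply,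
      Fintype.sum_prod_type, Fintype.sum_eq_single i fun i' hi' => by simp [Ne.symm hi']]
    simp
  simp only [Scomp, mem_weightedHomogeneousSubmodule, IsWeightedHomogeneous,
    MvPolynomial.mem_support_iff, _root_.funext_iff, hweight]

lemma mem_Scomp_one_iff {F : MvPolynomial (Fin d × Fin n) ℂ} :
    (F ∈ Scomp n d fun _ => 1) ↔ ∀ a ∈ F.support, ∃ g, graphExp g = a := by
  simp only [mem_Scomp_iff, exists_graphExp_eq_iff]

lemma eq_sum_graphExp {F : MvPolynomial (Fin d × Fin n) ℂ} (hF : F ∈ Scomp n d fun _ => 1) :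
    F = ∑ g, monomial (graphExp g) (coeff (graphExp g) F) := by
  ext a
  simp only [coeff_sum, coeff_monomial]
  by_cases ha : ∃ g, graphExp g = a
  · obtain ⟨g, rfl⟩ := ha
    simp [graphExp_injective.eq_iff]
  · have hF0 : coeff a F = 0 := by
      by_contra h
      exact ha (mem_Scomp_one_iff.mp hF a (MvPolynomial.mem_support_iff.mpr h))
    simp only [hF0]
    exact (Finset.sum_eq_zero fun g _ => if_neg fun h => ha ⟨g, h⟩).symm

lemma isHomogeneous_of_mem_Scomp_one {F : MvPolynomial (Fin d × Fin n) ℂ}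
    (hF : F ∈ Scomp n d fun _ => 1) : F.IsHomogeneous d := by
  rw [eq_sum_graphExp hF]
  exact IsHomogeneous.sum _ _ _ fun g _ =>
    isHomogeneous_monomial _ ((degree_graphExp g).trans (Fintype.card_fin d))

lemma monomial_graphExp_mem_Scomp_one (g : Fin d → Fin n) (c : ℂ) :
    monomial (graphExp g) c ∈ Scomp n d fun _ => 1 :=
  mem_Scomp_one_iff.mpr fun _ ha =>
    ⟨g, (Finset.mem_singleton.mp (support_monomial_subset ha)).symm⟩

lemma piL_apply (ψ : MvPolynomial (Fin d × Fin n) ℂ) : piL n d ψ = rename Prod.snd ψ := by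
  rw [rename_eq_aeval]
  rfl

lemma map_piL_Scomp_one : (Scomp n d fun _ => 1).map (piL n d) = Vcomp n d := by
  apply le_antisymm
  · rintro _ ⟨ψ, hψ, rfl⟩
    rw [piL_apply]
    exact (isHomogeneous_of_mem_Scomp_one hψ).rename_isHomogeneous
  · intro q hq
    rw [q.as_sum]
    refine Submodule.sum_mem _ fun γ hγ => ?_
    obtain ⟨g, hg⟩ := exists_content_eq γ
      (((mem_homogeneousSubmodule _ _).mp hq).degree_eq_sum_deg_support hγ).symm
    exact ⟨_, monomial_graphExp_mem_Scomp_one g (coeff γ q),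
      by rw [piL_apply, rename_monomial, mapDomain_snd_graphExp, hg]⟩

end Tensor

section SymmetricTensor

variable {n d : ℕ} {F : MvPolynomial (Fin d × Fin n) ℂ}

lemma IsSymm.coeff_graphExp_comp (hsym : IsSymm n d F) (g : Fin d → Fin n)
    (τ : Equiv.Perm (Fin d)) : coeff (graphExp (g ∘ τ)) F = coeff (graphExp g) F := by
  calc coeff (graphExp (g ∘ τ)) F
      = coeff ((graphExp g).mapDomain (Prod.map τ.symm id)) (rename (Prod.map τ.symm id) F) := by
        rw [mapDomain_prodMap_graphExp, Equiv.symm_symm, hsym]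
    _ = coeff (graphExp g) F :=
        coeff_rename_mapDomain _ (τ.symm.injective.prodMap Function.injective_id) _ _

lemma coeff_pF (hF : F ∈ Scomp n d fun _ => 1) (γ : Fin n →₀ ℕ) :
    coeff γ (pF n d F) = ∑ g with content g = γ, coeff (graphExp g) F := by
  conv_lhs => rw [pF, eq_sum_graphExp hF]
  simp [rename_monomial, mapDomain_snd_graphExp, coeff_sum, coeff_monomial, Finset.sum_filter]

lemma coeff_pF_content_mul_prod_factorial (hF : F ∈ Scomp n d fun _ => 1) (hsym : IsSymm n d F)
    (g : Fin d → Fin n) :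
    coeff (content g) (pF n d F) * ((content g).prod fun _ k => k ! : ℕ) =
      d ! * coeff (graphExp g) F := by
  have hconst : ∀ h ∈ ({h | content h = content g} : Finset (Fin d → Fin n)),
      coeff (graphExp h) F = coeff (graphExp g) F := fun h hh => by
    obtain ⟨τ, rfl⟩ := exists_perm_of_content_eq (Finset.mem_filter.mp hh).2
    exact hsym.coeff_graphExp_comp g τ
  rw [coeff_pF hF, Finset.sum_congr rfl hconst, Finset.sum_const, nsmul_eq_mul, mul_right_comm,
    ← Nat.cast_mul, card_content_eq_mul_prod_factorial, Fintype.card_fin]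

lemma apolar_eq_C_sum (hF : F ∈ Scomp n d fun _ => 1) {ψ : MvPolynomial (Fin d × Fin n) ℂ}
    (hψ : ψ ∈ Scomp n d fun _ => 1) :
    apolar F ψ = C (∑ g, coeff (graphExp g) ψ * coeff (graphExp g) F) := by
  conv_lhs => rw [eq_sum_graphExp hψ]
  simp only [map_sum]
  refine Finset.sum_congr rfl fun g _ => ?_
  rw [apolar_monomial, diffMon_of_isHomogeneous (isHomogeneous_of_mem_Scomp_one hF)
      ((degree_graphExp g).trans (Fintype.card_fin d)), prod_factorial_graphExp,
    smul_eq_C_mul, Nat.cast_one, mul_one, C_mul]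

lemma apolar_pF_piL (hF : F ∈ Scomp n d fun _ => 1) (hsym : IsSymm n d F)
    {ψ : MvPolynomial (Fin d × Fin n) ℂ} (hψ : ψ ∈ Scomp n d fun _ => 1) :
    apolar (pF n d F) (piL n d ψ) =
      C (d ! * ∑ g, coeff (graphExp g) ψ * coeff (graphExp g) F) := by
  have hpF : (pF n d F).IsHomogeneous d :=
    (isHomogeneous_of_mem_Scomp_one hF).rename_isHomogeneous
  conv_lhs => rw [eq_sum_graphExp hψ]
  simp only [map_sum, Finset.mul_sum]
  refine Finset.sum_congr rfl fun g _ => ?_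
  rw [piL_apply, rename_monomial, mapDomain_snd_graphExp, apolar_monomial,
    diffMon_of_isHomogeneous hpF ((degree_content g).trans (Fintype.card_fin d)),
    coeff_pF_content_mul_prod_factorial hF hsym, smul_eq_C_mul, ← C_mul, mul_left_comm]

lemma apolar_pF_piL_eq_zero_iff (hF : F ∈ Scomp n d fun _ => 1) (hsym : IsSymm n d F)
    {ψ : MvPolynomial (Fin d × Fin n) ℂ} (hψ : ψ ∈ Scomp n d fun _ => 1) :
    apolar (pF n d F) (piL n d ψ) = 0 ↔ apolar F ψ = 0 := by
  rw [apolar_pF_piL hF hsym hψ, apolar_eq_C_sum hF hψ, C_eq_zero, C_eq_zero, mul_eq_zero,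
    or_iff_right (Nat.cast_ne_zero.mpr (Nat.factorial_ne_zero d))]

end SymmetricTensor

theorem stmt_3_general (n d : ℕ)
    (F : MvPolynomial (Fin d × Fin n) ℂ)
    (hF : F ∈ Scomp n d fun _ => 1) (hsym : IsSymm n d F) :
    Submodule.map (piL n d) (ann F ⊓ Scomp n d fun _ => 1) =
      ann (pF n d F) ⊓ Vcomp n d :=
  map_ker_inf_eq map_piL_Scomp_one fun _ hψ => apolar_pF_piL_eq_zero_iff hF hsym hψ

/-- Lemma 3.6: for a symmetric tensor `F`,
`π(Ann(F)_𝟏) = Ann(p_F)_d`. -/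
theorem stmt_3 (n d : ℕ) (hn : 0 < n) (hd : 0 < d)
    (F : MvPolynomial (Fin d × Fin n) ℂ)
    (hF : F ∈ Scomp n d fun _ => 1) (hsym : IsSymm n d F) :
    Submodule.map (piL n d) (ann F ⊓ Scomp n d fun _ => 1) =
      ann (pF n d F) ⊓ Vcomp n d :=
  stmt_3_general n d F hF hsym

end BorderComon
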